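/- arXiv:1812.03466 — 4 statements merged into one kernel-verified Lean document; each statement's English description precedes it below -/
import Mathlib

section
/- Hochschild's formula: Let B be a commutative ring of prime characteristic p, let D : B → B be a derivation, and let a ∈ B. Then the p-th iterate of the derivation aD (defined by (aD)(b) = a·D(b)) satisfies (aD)^p = a^p·D^p + ((aD)^{p−1}(a))·D, i.e., for every b ∈ B one has (aD)^p(b) = a^p·D^p(b) + ((aD)^{p−1}(a))·D(b). -/
/-!
Write `(a • D)^[n] = ∑ₖ c n k • D^[k]`, where the coefficients `c n k` obey the recursion coming
from the Leibniz rule; it gives `c p p = a ^ p`, `c p 0 = 0` and `c p 1 = (a • D)^[p - 1] a`.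
For `1 < m < p`, extend `D` to `B[X]` by `D X = 1`. In characteristic `p` the iterate `(a • D)^[p]`
is again a derivation, so `(a • D)^[p] (X ^ m) = m X ^ (m - 1) (a • D)^[p] X` has no constant
term, whereas the constant term of `∑ₖ c p k • D^[k] (X ^ m)` is `m! • c p m`. As `m!` is a unit,
`c p m = 0`.
-/

open Polynomial Finset
open scoped Nat

namespace Derivation

section Iterate
variable {R A : Type*} [CommSemiring R] [CommSemiring A] [Algebra R A] (D : Derivation R A A)

theorem iterate_map_mul (n : ℕ) (x y : A) :
    D^[n] (x * y) = ∑ ij ∈ antidiagonal n, n.choose ij.1 • (D^[ij.1] x * D^[ij.2] y) := by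
  induction n with
  | zero => simp
  | succ n ih =>
    rw [sum_antidiagonal_choose_succ_nsmul (fun i j => D^[i] x * D^[j] y) n]
    simp only [Function.iterate_succ_apply', ih, map_sum, map_nsmul, leibniz, smul_eq_mul,
      smul_add, sum_add_distrib]
    congr 1
    refine sum_congr rfl fun ⟨i, j⟩ hij => ?_
    rw [n.choose_symm_of_eq_add (mem_antidiagonal.1 hij).symm, mul_comm]

theorem iterate_prime_leibniz {p : ℕ} (hp : p.Prime) [CharP A p] (x y : A) :
    D^[p] (x * y) = x * D^[p] y + y * D^[p] x := by
  rw [iterate_map_mul, sum_eq_add (0, p) (p, 0) (by simp [hp.ne_zero])]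
  · simp [mul_comm]
  · rintro ⟨i, j⟩ hij hne
    replace hij : i + j = p := by simpa using hij
    have hp_dvd : p ∣ p.choose i := hp.dvd_choose_self (by grind) (by grind)
    rw [nsmul_eq_mul, (CharP.cast_eq_zero_iff A p _).mpr hp_dvd, zero_mul]
  all_goals simp

def iteratePrime {p : ℕ} (hp : p.Prime) [CharP A p] : Derivation R A A where
  toLinearMap := D.toLinearMap ^ p
  map_one_eq_zero' := by
    obtain ⟨q, hq⟩ := Nat.exists_eq_succ_of_ne_zero hp.ne_zero
    simp [Module.End.coe_pow, hq, Function.iterate_succ_apply]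
  leibniz' x y := by
    simp [Module.End.coe_pow, D.iterate_prime_leibniz hp, smul_eq_mul]

@[simp] theorem coe_iteratePrime {p : ℕ} (hp : p.Prime) [CharP A p] :
    ⇑(D.iteratePrime hp) = D^[p] :=
  Module.End.coe_pow _ _

def iterateSmulCoeff (a : A) : ℕ → ℕ → A
  | 0, 0 => 1
  | 0, _ + 1 => 0
  | n + 1, 0 => a * D (iterateSmulCoeff a n 0)
  | n + 1, k + 1 => a * (D (iterateSmulCoeff a n (k + 1)) + iterateSmulCoeff a n k)

variable (a : A)

theorem iterateSmulCoeff_of_lt {n k : ℕ} (h : n < k) : D.iterateSmulCoeff a n k = 0 := by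
  induction n generalizing k with
  | zero => obtain ⟨k, rfl⟩ := Nat.exists_eq_succ_of_ne_zero h.ne'; rfl
  | succ n ih =>
    obtain ⟨k, rfl⟩ := Nat.exists_eq_succ_of_ne_zero (by omega : k ≠ 0)
    rw [iterateSmulCoeff, ih (by omega), ih (by omega), map_zero, zero_add, mul_zero]

theorem iterateSmulCoeff_self (n : ℕ) : D.iterateSmulCoeff a n n = a ^ n := by
  induction n with
  | zero => rw [pow_zero]; rfl
  | succ n ih =>
    rw [iterateSmulCoeff, iterateSmulCoeff_of_lt D a n.lt_succ_self, map_zero, zero_add, ih,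
      pow_succ']

theorem iterateSmulCoeff_succ_zero (n : ℕ) : D.iterateSmulCoeff a (n + 1) 0 = 0 := by
  induction n with
  | zero => rw [iterateSmulCoeff, iterateSmulCoeff, map_one_eq_zero, mul_zero]
  | succ n ih => rw [iterateSmulCoeff, ih, map_zero, mul_zero]

theorem iterateSmulCoeff_succ_one (n : ℕ) : D.iterateSmulCoeff a (n + 1) 1 = (a • D)^[n] a := by
  induction n with
  | zero => simp [iterateSmulCoeff]
  | succ n ih =>
    rw [iterateSmulCoeff, iterateSmulCoeff_succ_zero, add_zero, ih, Function.iterate_succ_apply']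
    rfl

theorem iterate_smul_eq_sum (n : ℕ) (y : A) :
    (a • D)^[n] y = ∑ k ∈ range (n + 1), D.iterateSmulCoeff a n k * D^[k] y := by
  induction n with
  | zero => simp [iterateSmulCoeff]
  | succ n ih =>
    set c := D.iterateSmulCoeff a
    have hD (k : ℕ) : D (c n k * D^[k] y) = c n k * D^[k + 1] y + D (c n k) * D^[k] y := by
      rw [leibniz, smul_eq_mul, smul_eq_mul, Function.iterate_succ_apply', mul_comm (D^[k] y)]
    have htop : c n (n + 1) = 0 := D.iterateSmulCoeff_of_lt a n.lt_add_one
    have hshift : ∑ k ∈ range (n + 1), a * (D (c n k) * D^[k] y)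
        = ∑ k ∈ range (n + 1), a * (D (c n (k + 1)) * D^[k + 1] y) + a * (D (c n 0) * y) := by
      rw [sum_range_succ (fun k => a * (D (c n (k + 1)) * D^[k + 1] y)),
        htop, map_zero, zero_mul, mul_zero, add_zero, sum_range_succ']
      rfl
    rw [Function.iterate_succ_apply', ih, smul_apply, smul_eq_mul, map_sum, mul_sum]
    simp only [hD, mul_add, sum_add_distrib]
    rw [hshift, sum_range_succ' _ (n + 1)]
    simp only [c, iterateSmulCoeff, Function.iterate_zero_apply, add_mul, mul_assoc, mul_add,
      sum_add_distrib]
    ring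

theorem iterateSmulCoeff_map {R' A' : Type*} [CommSemiring R'] [CommSemiring A'] [Algebra R' A']
    (D' : Derivation R' A' A') (f : A →+* A') (hf : ∀ x, D' (f x) = f (D x)) (n k : ℕ) :
    D'.iterateSmulCoeff (f a) n k = f (D.iterateSmulCoeff a n k) := by
  induction n generalizing k with
  | zero => cases k <;> simp [iterateSmulCoeff]
  | succ n ih => cases k <;> simp [iterateSmulCoeff, ih, hf]

end Iterate

section PolynomialExtension
variable {R A : Type*} [CommRing R] [CommRing A] [Algebra R A]

noncomputable def polynomialExtension (D : Derivation R A A) : Derivation R A[X] A[X] :=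
  PolynomialModule.equivPolynomialSelf.compDer D.mapCoeffs +
    (derivative' : Derivation A A[X] A[X]).restrictScalars R

variable (D : Derivation R A A)

@[simp] theorem polynomialExtension_C (x : A) : D.polynomialExtension (C x) = C (D x) := by
  simp [polynomialExtension]

@[simp] theorem polynomialExtension_X : D.polynomialExtension X = 1 := by
  simp [polynomialExtension]

theorem iterate_polynomialExtension_X_pow (k m : ℕ) :
    D.polynomialExtension^[k] (X ^ m) = (m.descFactorial k : A[X]) * X ^ (m - k) := by
  induction k with
  | zero => simp
  | succ k ih =>
    rw [Function.iterate_succ_apply', ih, leibniz, map_natCast, smul_zero, add_zero, leibniz_pow,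
      polynomialExtension_X, Nat.descFactorial_succ, Nat.sub_sub]
    simp only [smul_eq_mul, nsmul_eq_mul, mul_one, Nat.cast_mul]
    ring

theorem coeff_zero_iterate_polynomialExtension_X_pow (k m : ℕ) :
    (D.polynomialExtension^[k] (X ^ m)).coeff 0 = if k = m then (m ! : A) else 0 := by
  rw [iterate_polynomialExtension_X_pow, coeff_natCast_mul, coeff_X_pow]
  rcases lt_trichotomy k m with hlt | rfl | hgt
  · simp [hlt.ne, (Nat.sub_pos_of_lt hlt).ne]
  · simp [Nat.descFactorial_self]
  · simp [hgt.ne', Nat.descFactorial_eq_zero_iff_lt.mpr hgt]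

theorem iterateSmulCoeff_prime_eq_zero {p : ℕ} (hp : p.Prime) [CharP A p] (a : A) {m : ℕ}
    (h1 : 1 < m) (h2 : m < p) : D.iterateSmulCoeff a p m = 0 := by
  set E := C a • D.polynomialExtension
  have hexpand : (E^[p] (X ^ m)).coeff 0 = D.iterateSmulCoeff a p m * m ! := by
    rw [iterate_smul_eq_sum, finsetSum_coeff]
    simp only [D.iterateSmulCoeff_map a D.polynomialExtension C (polynomialExtension_C D),
      coeff_C_mul, coeff_zero_iterate_polynomialExtension_X_pow, mul_ite, mul_zero]
    rw [sum_ite_eq', if_pos (mem_range.mpr (by omega))]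
  have hleibniz : (E^[p] (X ^ m)).coeff 0 = 0 := by
    rw [← coe_iteratePrime E hp, leibniz_pow, coeff_smul, smul_eq_mul, coeff_X_pow_mul',
      if_neg (by omega), smul_zero]
  have hunit : IsUnit (m ! : A) :=
    (CharP.isUnit_natCast_iff hp).mpr fun h => by rw [hp.dvd_factorial] at h; omega
  exact hunit.mul_left_eq_zero.mp (hexpand ▸ hleibniz)

end PolynomialExtension

end Derivation

/-- **Hochschild's formula.** If `B` is a commutative ring of prime characteristic `p`,
`D : B → B` is a derivation (additive and satisfying the Leibniz rule) and `a ∈ B`, then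
`(aD)^p = a^p · D^p + ((aD)^{p-1}(a)) · D`. -/
theorem hochschild_formula {B : Type*} [CommRing B] (p : ℕ) (hp : p.Prime) [CharP B p]
    (D : B → B) (hadd : ∀ x y : B, D (x + y) = D x + D y)
    (hleib : ∀ x y : B, D (x * y) = x * D y + D x * y) (a : B) (b : B) :
    (fun c => a * D c)^[p] b = a ^ p * D^[p] b + ((fun c => a * D c)^[p - 1] a) * D b := by
  let d : Derivation ℤ B B := Derivation.mk' (AddMonoidHom.mk' D hadd).toIntLinearMap
    fun x y => by simp [hleib, mul_comm]
  change (a • d)^[p] b = a ^ p * d^[p] b + (a • d)^[p - 1] a * d b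
  have hp_succ : p - 1 + 1 = p := Nat.sub_add_cancel hp.one_le
  rw [d.iterate_smul_eq_sum, sum_eq_add p 1 hp.one_lt.ne', d.iterateSmulCoeff_self,
    ← d.iterateSmulCoeff_succ_one, hp_succ, Function.iterate_one]
  · intro k hk hne
    obtain rfl | hk0 := Nat.eq_zero_or_pos k
    · rw [← hp_succ, d.iterateSmulCoeff_succ_zero, zero_mul]
    · rw [d.iterateSmulCoeff_prime_eq_zero hp a (by omega) (by grind), zero_mul]
  all_goals simp [hp.ne_zero]
end

section
/- Let B be a local domain containing a field of characteristic p > 0, with maximal ideal 𝔪 and fraction field K, and let D : B → B be a nonzero derivation that is p-closed (its unique extension to K satisfies D^p = h·D for some h ∈ K). Assume the ideal of B generated by the image of D is principal. Then there exist a family (x_j)_{j∈J} of elements with D(x_j) = 0 and an element y such that the x_j together with y generate 𝔪. Moreover, if 𝔪 can be generated by n elements, then one can choose such a family with |J| = n − 1. -/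
/-!
Write `D = m • E` where some value `E y` is a unit, normalised to `E y = 1`. Expanding `(m • E)^p`
in powers of `E` turns `p`-closedness into a relation among `1, E, …, E^p`. Commuting with
multiplication by `y` lowers the order (`[E^k, y] = k E^(k-1)`), so `1, E, …, E^(p-1)` are
independent over `B` and the relation forces `E^p = 0`. Then the truncated Taylor series
`π f = ∑_{j<p} (-y)^j / j! • E^j f` is killed by `E`, and `π f - f` lies in the ideal generated by
the `y • E^(j+1) f`. If `y` can be taken in `𝔪` this gives `𝔪 = (𝔪 ∩ ker E) + (y)`; otherwise `E`
maps `𝔪` into itself and induction on the nilpotency order of `f` gives `𝔪 = (𝔪 ∩ ker E)`. The bound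
`n - 1` comes from the exchange argument for generating sets of a module over a local ring.
-/

open Finset Nat

namespace IsLocalRing

variable {R M : Type*} [CommRing R] [IsLocalRing R] [AddCommGroup M] [Module R M]
  {N : Submodule R M} {S : Set M}

open Submodule

theorem exists_isUnit_of_span_eq_top {s : Set R} (h : Ideal.span s = ⊤) : ∃ x ∈ s, IsUnit x := by
  by_contra! hs
  exact (maximalIdeal.isMaximal R).ne_top <| top_le_iff.1 <|
    h ▸ Ideal.span_le.2 fun x hx => (mem_maximalIdeal x).2 (hs x hx)

theorem span_eq_or_exists_span_insert_eq (hS : span R S = N) {τ : M} {W : Set M}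
    (hτ : span R (insert τ W) = N) : span R W = N ∨ ∃ σ ∈ S, span R (insert σ W) = N := by
  by_contra! h
  obtain ⟨hW, hσ⟩ := h
  have hSN : S ⊆ N := hS ▸ subset_span
  have hWN : W ⊆ N := hτ ▸ (Set.subset_insert τ W).trans subset_span
  -- if some `σ ∈ S` had a unit coefficient on `τ`, it could replace `τ`
  have hS_le : N ≤ maximalIdeal R • (R ∙ τ) ⊔ span R W := by
    refine hS ▸ span_le.2 fun σ hσS => ?_
    obtain ⟨a, z, hz, rfl⟩ := mem_span_insert.1 (hτ ▸ hSN hσS)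
    refine add_mem_sup (smul_mem_smul ((mem_maximalIdeal a).2 fun ha => ?_)
      (mem_span_singleton_self τ)) hz
    refine hσ _ hσS (le_antisymm (span_le.2 (Set.insert_subset (hSN hσS) hWN)) ?_)
    have : τ ∈ span R (insert (a • τ + z) W) := by
      refine (smul_mem_iff_of_isUnit _ ha).1 ?_
      simpa using sub_mem (subset_span (Set.mem_insert (a • τ + z) W))
        (span_mono (Set.subset_insert _ W) hz)
    rw [← hτ, span_le]
    exact Set.insert_subset this (subset_span.trans (span_mono (Set.subset_insert _ W)))
  obtain ⟨_, hy, z, hz, hyz⟩ := mem_sup.1 (hS_le (hτ ▸ subset_span (Set.mem_insert τ W)))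
  obtain ⟨a, ha, rfl⟩ := mem_smul_span_singleton.1 hy
  have hτW : τ ∈ span R W := by
    have h1a : (1 - a) • τ = z := by
      rw [sub_smul, one_smul, sub_eq_iff_eq_add]
      exact hyz.symm.trans (add_comm _ _)
    exact (smul_mem_iff_of_isUnit _ (isUnit_one_sub_self_of_mem_nonunits a ha)).1 (h1a ▸ hz)
  exact hW (by rw [← span_insert_eq_span hτW, hτ])

theorem exists_finset_subset_card_le_span_eq (hS : span R S = N) (t : Finset M)
    (ht : span R t = N) : ∃ u : Finset M, ↑u ⊆ S ∧ u.card ≤ t.card ∧ span R ↑u = N := by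
  classical
  suffices ∀ C : Finset M, ↑C ⊆ S → span R ↑(t ∪ C) = N →
      ∃ u : Finset M, ↑u ⊆ S ∧ u.card ≤ t.card + C.card ∧ span R ↑u = N by
    simpa using this ∅ (by simp) (by simpa using ht)
  clear ht
  induction t using Finset.induction_on with
  | empty => exact fun C hC hspan => ⟨C, hC, by simp, by simpa using hspan⟩
  | insert τ t hτ ih =>
    intro C hC hspan
    rw [insert_union, coe_insert] at hspan
    rw [card_insert_of_notMem hτ]
    rcases span_eq_or_exists_span_insert_eq hS hspan with h | ⟨σ, hσS, h⟩
    · obtain ⟨u, huS, hu, hspan⟩ := ih C hC h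
      exact ⟨u, huS, by omega, hspan⟩
    · obtain ⟨u, huS, hu, hspan⟩ := ih (insert σ C) (by simpa using Set.insert_subset hσS hC)
        (by rwa [union_insert, coe_insert])
      exact ⟨u, huS, by grind [card_insert_le σ C], hspan⟩

theorem exists_finset_subset_card_le_pred {y : M} (hS : span R (insert y S) = N) (t : Finset M)
    (ht : span R t = N) :
    ∃ (v : Finset M) (y' : M), ↑v ⊆ S ∧ v.card ≤ t.card - 1 ∧ span R (insert y' ↑v) = N := by
  classical
  obtain ⟨u, huS, hu, hspan⟩ := exists_finset_subset_card_le_span_eq hS t ht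
  rcases u.eq_empty_or_nonempty with rfl | ⟨z, hz⟩
  · refine ⟨∅, y, by simp, by simp, le_antisymm ?_ ?_⟩
    · exact hS ▸ span_mono (by simp)
    · simp [← hspan]
  · let y' := if y ∈ u then y else z
    have hy' : y' ∈ u := by unfold y'; split_ifs <;> assumption
    refine ⟨u.erase y', y', fun x hx => ?_, by rw [card_erase_of_mem hy']; omega, ?_⟩
    · obtain ⟨hxy, hxu⟩ := mem_erase.1 hx
      rcases huS hxu with rfl | h
      · simp [y', hxu] at hxy
      · exact h
    · rw [← coe_insert, insert_erase hy', hspan]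

end IsLocalRing

theorem Submodule.exists_fin_span_range_eq {R M : Type*} [Semiring R] [AddCommMonoid M]
    [Module R M] (v : Finset M) {n : ℕ} (hv : v.card ≤ n) :
    ∃ x : Fin n → M, (∀ j, x j = 0 ∨ x j ∈ v) ∧ span R (Set.range x) = span R ↑v := by
  have : ∀ j : Fin n, v.toList.getD j 0 = 0 ∨ v.toList.getD j 0 ∈ v := by
    intro j
    by_cases hj : (j : ℕ) < v.toList.length
    · right
      rw [List.getD_eq_getElem _ _ hj]
      exact mem_toList.1 (List.getElem_mem hj)
    · exact .inl (List.getD_eq_default _ _ (not_lt.1 hj))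
  refine ⟨fun j => v.toList.getD j 0, this, le_antisymm ?_ ?_⟩
  · rw [span_le]
    rintro _ ⟨j, rfl⟩
    rcases this j with h | h
    · simp only [SetLike.mem_coe, h, zero_mem]
    · exact subset_span h
  · rw [span_le]
    intro σ hσ
    obtain ⟨i, hi, rfl⟩ := List.mem_iff_getElem.1 (mem_toList.2 hσ)
    refine subset_span ⟨⟨i, hi.trans_le (by simpa using hv)⟩, ?_⟩
    exact List.getD_eq_getElem _ _ hi

theorem CharP.natCast_ne_zero_of_ne_zero_of_lt {B : Type*} [AddMonoidWithOne B] {p : ℕ} [CharP B p]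
    {n : ℕ} (h0 : n ≠ 0) (hn : n < p) : (n : B) ≠ 0 := by
  rw [Ne, CharP.cast_eq_zero_iff B p]
  exact fun h => (Nat.le_of_dvd (Nat.pos_of_ne_zero h0) h).not_gt hn

theorem succ_mul_castHom_inv_factorial_succ {B : Type*} [CommRing B] {p : ℕ} [Fact p.Prime]
    [CharP B p] {j : ℕ} (hj : j + 1 < p) :
    (j + 1 : B) * ZMod.castHom dvd_rfl B ((j + 1)! : ZMod p)⁻¹ =
      ZMod.castHom dvd_rfl B (j ! : ZMod p)⁻¹ := by
  have : ((j + 1 : ℕ) : ZMod p) ≠ 0 := by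
    rw [Ne, ZMod.natCast_eq_zero_iff]
    exact fun h => (Nat.le_of_dvd j.succ_pos h).not_gt hj
  rw [← Nat.cast_succ, ← map_natCast (ZMod.castHom (dvd_refl p) B) (j + 1), ← map_mul,
    factorial_succ, cast_mul, mul_inv, ← mul_assoc, mul_inv_cancel₀ this, one_mul]

namespace Derivation

variable {R B : Type*} [CommRing R] [CommRing B] [Algebra R B] (E : Derivation R B B)

theorem iterate_map_one_succ (k : ℕ) : E^[k + 1] 1 = 0 := by
  rw [Function.iterate_succ_apply, map_one_eq_zero, iterate_map_zero]

theorem iterate_succ_mul_of_apply_eq_one {y : B} (hy : E y = 1) (k : ℕ) (f : B) :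
    E^[k + 1] (y * f) = y * E^[k + 1] f + (k + 1) * E^[k] f := by
  induction k with
  | zero => simp [leibniz, hy]
  | succ k ih =>
    rw [Function.iterate_succ_apply', ih, map_add, leibniz, hy, ← Nat.cast_succ, leibniz,
      map_natCast]
    simp only [Function.iterate_succ_apply', smul_eq_mul]
    push_cast
    ring

theorem coeff_zero_eq_zero_of_sum_iterate {M : ℕ} {c : ℕ → B}
    (h : ∀ f, ∑ k ∈ range (M + 1), c k * E^[k] f = 0) : c 0 = 0 := by
  simpa [sum_range_succ', iterate_map_one_succ] using h 1

theorem sum_iterate_shift {y : B} (hy : E y = 1) {M : ℕ} {c : ℕ → B}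
    (h : ∀ f, ∑ k ∈ range (M + 1), c k * E^[k] f = 0) (f : B) :
    ∑ k ∈ range M, ((k + 1) * c (k + 1)) * E^[k] f = 0 := calc
  _ = ∑ k ∈ range (M + 1), c k * E^[k] (y * f) - y * ∑ k ∈ range (M + 1), c k * E^[k] f := by
    rw [mul_sum, ← sum_sub_distrib, sum_range_succ']
    simp only [iterate_succ_mul_of_apply_eq_one E hy, Function.iterate_zero_apply]
    rw [show c 0 * (y * f) - y * (c 0 * f) = 0 by ring, add_zero]
    exact sum_congr rfl fun k _ => by ring
  _ = 0 := by rw [h, h, mul_zero, sub_zero]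

theorem coeff_eq_zero_of_sum_iterate [IsDomain B] {p : ℕ} [CharP B p] {y : B} (hy : E y = 1)
    {M : ℕ} (hM : M ≤ p) {c : ℕ → B} (h : ∀ f, ∑ k ∈ range (M + 1), c k * E^[k] f = 0) :
    ∀ k < M, c k = 0 := by
  induction M generalizing c with
  | zero => simp
  | succ M ih =>
    intro k hk
    cases k with
    | zero => exact E.coeff_zero_eq_zero_of_sum_iterate h
    | succ k =>
      have hk' := ih (by omega) (E.sum_iterate_shift hy h) k (by omega)
      have : ((k + 1 : ℕ) : B) ≠ 0 := CharP.natCast_ne_zero_of_ne_zero_of_lt (by omega) (by omega)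
      push_cast at this
      exact (mul_eq_zero.mp hk').resolve_left this

theorem exists_iterate_smul_eq_sum (m : B) (n : ℕ) :
    ∃ c : ℕ → B, c n = m ^ n ∧ (∀ k, n < k → c k = 0) ∧
      ∀ f, (⇑(m • E))^[n] f = ∑ k ∈ range (n + 1), c k * E^[k] f := by
  induction n with
  | zero => exact ⟨fun k => if k = 0 then 1 else 0, by simp, fun k hk => by simp [hk.ne'],
      fun f => by simp⟩
  | succ n ih =>
    obtain ⟨c, hcn, hc0, hc⟩ := ih
    refine ⟨fun k => m * E (c k) + if k = 0 then 0 else m * c (k - 1), ?_, ?_, fun f => ?_⟩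
    · simp [hc0 (n + 1) n.lt_succ_self, hcn, pow_succ, mul_comm]
    · intro k hk
      simp [hc0 k (by omega), hc0 (k - 1) (by omega)]
    · rw [Function.iterate_succ_apply', hc, smul_apply, smul_eq_mul, map_sum, mul_sum]
      simp only [add_mul, sum_add_distrib, leibniz, smul_eq_mul, mul_add]
      rw [sum_range_succ _ (n + 1), hc0 (n + 1) n.lt_succ_self, map_zero, mul_zero, zero_mul,
        add_zero, sum_range_succ' _ (n + 1)]
      simp only [add_eq_zero, one_ne_zero, and_false, ↓reduceIte, add_tsub_cancel_right,
        Function.iterate_zero_apply, zero_mul, add_zero, ← Function.iterate_succ_apply' E]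
      rw [add_comm]
      congr 1 <;> exact sum_congr rfl fun _ _ => by ring

/-- The derivation `D` is `p`-closed: `D^p = h • D` on the fraction field, with `h = h₁ / h₂`. -/
def IsPClosed (D : Derivation R B B) (p : ℕ) : Prop :=
  ∃ h₁ h₂ : B, h₂ ≠ 0 ∧ ∀ f, h₂ * D^[p] f = h₁ * D f

theorem iterate_eq_zero_of_isPClosed [IsDomain B] {p : ℕ} [CharP B p] (hp : p.Prime) {y : B}
    (hy : E y = 1) {m : B} (hm : m ≠ 0) (hcl : (m • E).IsPClosed p) (f : B) : E^[p] f = 0 := by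
  obtain ⟨h₁, h₂, hh₂, hcl⟩ := hcl
  obtain ⟨c, hcp, -, hc⟩ := E.exists_iterate_smul_eq_sum m p
  set a : ℕ → B := fun k => h₂ * c k - if k = 1 then h₁ * m else 0
  have hrel : ∀ f, ∑ k ∈ range (p + 1), a k * E^[k] f = 0 := by
    intro f
    have := hcl f
    rw [hc, smul_apply, smul_eq_mul, mul_sum] at this
    simp only [a, sub_mul, sum_sub_distrib, ite_mul, zero_mul, sum_ite_eq', mem_range]
    simp [hp.one_lt.trans (Nat.lt_succ_self p), this, mul_assoc]
  have hlow := E.coeff_eq_zero_of_sum_iterate hy le_rfl hrel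
  have hf := hrel f
  rw [sum_range_succ, sum_eq_zero fun k hk => by rw [hlow k (mem_range.mp hk), zero_mul],
    zero_add] at hf
  simpa [a, hp.ne_one, hcp, hh₂, hm] using hf

theorem map_zmodCastHom {p : ℕ} [NeZero p] [CharP B p] (x : ZMod p) :
    E (ZMod.castHom dvd_rfl B x) = 0 := by
  obtain ⟨n, rfl⟩ := ZMod.natCast_zmod_surjective x
  rw [_root_.map_natCast, E.map_natCast]

noncomputable def taylorProj (y : B) (p : ℕ) [CharP B p] (f : B) : B :=
  ∑ j ∈ range p, ZMod.castHom dvd_rfl B (j ! : ZMod p)⁻¹ * (-y) ^ j * E^[j] f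

theorem apply_taylorProj {p : ℕ} [CharP B p] (hp : p.Prime) {y : B} (hy : E y = 1)
    (hE : ∀ f, E^[p] f = 0) (f : B) : E (E.taylorProj y p f) = 0 := by
  have := Fact.mk hp
  obtain ⟨q, rfl⟩ : ∃ q, p = q + 1 := ⟨p - 1, (Nat.sub_add_cancel hp.one_le).symm⟩
  set a : ℕ → B := fun j => ZMod.castHom dvd_rfl B (j ! : ZMod (q + 1))⁻¹ * (-y) ^ j * E^[j + 1] f
  have hterm : ∀ j < q, E (ZMod.castHom dvd_rfl B ((j + 1)! : ZMod (q + 1))⁻¹ * (-y) ^ (j + 1) *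
      E^[j + 1] f) = a (j + 1) - a j := by
    intro j hj
    simp only [a, leibniz, leibniz_pow, map_neg, hy, map_zmodCastHom, smul_eq_mul, nsmul_eq_mul,
      Function.iterate_succ_apply' E (j + 1)]
    push_cast
    linear_combination (-(-y) ^ j * E^[j + 1] f) *
      succ_mul_castHom_inv_factorial_succ (B := B) (j := j) (by omega)
  unfold taylorProj
  rw [map_sum, sum_range_succ', sum_congr rfl fun j hj => hterm j (mem_range.mp hj),
    sum_range_sub]
  simp [a, hE, -Function.iterate_succ]

theorem taylorProj_sub_mem {p : ℕ} [NeZero p] [CharP B p] (y f : B) :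
    E.taylorProj y p f - f ∈ Ideal.span (Set.range fun j => y * E^[j + 1] f) := by
  obtain ⟨q, rfl⟩ : ∃ q, p = q + 1 := ⟨p - 1, (Nat.sub_add_cancel NeZero.one_le).symm⟩
  unfold taylorProj
  rw [sum_range_succ']
  simp only [factorial_zero, Nat.cast_one, ZMod.inv_one, _root_.map_one, pow_zero,
    Function.iterate_zero_apply, one_mul, add_sub_cancel_right]
  refine Ideal.sum_mem _ fun j _ => ?_
  have hj : y * E^[j + 1] f ∈ Ideal.span (Set.range fun j => y * E^[j + 1] f) :=
    Ideal.subset_span ⟨j, rfl⟩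
  convert Ideal.mul_mem_left _ (ZMod.castHom dvd_rfl B ((j + 1)! : ZMod (q + 1))⁻¹ * -(-y) ^ j) hj
    using 1
  ring

theorem mem_span_ker_sup_span_mul_iterate {p : ℕ} [CharP B p] (hp : p.Prime) {y : B} (hy : E y = 1)
    (hE : ∀ f, E^[p] f = 0) {I : Ideal B} {f : B} (hf : f ∈ I)
    (hI : Ideal.span (Set.range fun j => y * E^[j + 1] f) ≤ I) :
    f ∈ Ideal.span {x | x ∈ I ∧ E x = 0} ⊔ Ideal.span (Set.range fun j => y * E^[j + 1] f) := by
  have := Fact.mk hp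
  have hsub := E.taylorProj_sub_mem (p := p) y f
  have hproj : E.taylorProj y p f ∈ I := by simpa using add_mem (hI hsub) hf
  have hker : E.taylorProj y p f ∈ {x | x ∈ I ∧ E x = 0} := ⟨hproj, E.apply_taylorProj hp hy hE f⟩
  simpa using sub_mem (Submodule.mem_sup_left (Ideal.subset_span hker))
    (Submodule.mem_sup_right hsub)

theorem span_insert_ker_eq {p : ℕ} [CharP B p] (hp : p.Prime) {y : B} (hy : E y = 1)
    (hE : ∀ f, E^[p] f = 0) {I : Ideal B} (hyI : y ∈ I) :
    Ideal.span (insert y {x | x ∈ I ∧ E x = 0}) = I := by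
  refine le_antisymm (Ideal.span_le.2 (Set.insert_subset hyI fun x hx => hx.1)) fun f hf => ?_
  have hy' : Ideal.span (Set.range fun j => y * E^[j + 1] f) ≤ Ideal.span {y} :=
    Ideal.span_le.2 <| Set.range_subset_iff.2 fun j =>
      Ideal.mul_mem_right _ _ (Ideal.mem_span_singleton_self y)
  rw [Ideal.span_insert, sup_comm]
  exact sup_le_sup_left hy' _ <| E.mem_span_ker_sup_span_mul_iterate hp hy hE hf <|
    hy'.trans ((Ideal.span_singleton_le_iff_mem I).2 hyI)

theorem span_ker_eq {p : ℕ} [CharP B p] (hp : p.Prime) {y : B} (hy : E y = 1)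
    (hE : ∀ f, E^[p] f = 0) {I : Ideal B} (hI : Set.MapsTo E I I) :
    Ideal.span {x | x ∈ I ∧ E x = 0} = I := by
  refine le_antisymm (Ideal.span_le.2 fun x hx => hx.1) fun f hf => ?_
  suffices ∀ r f, f ∈ I → E^[r] f = 0 → f ∈ Ideal.span {x | x ∈ I ∧ E x = 0} from
    this p f hf (hE f)
  intro r
  induction r with
  | zero =>
    rintro f - rfl
    exact zero_mem _
  | succ r ih =>
    intro f hf hr
    have hR : Ideal.span (Set.range fun j => y * E^[j + 1] f) ≤
        Ideal.span {x | x ∈ I ∧ E x = 0} := by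
      refine Ideal.span_le.2 <| Set.range_subset_iff.2 fun j => Ideal.mul_mem_left _ _ <|
        ih _ (hI.iterate (j + 1) hf) ?_
      rw [← Function.iterate_add_apply, show r + (j + 1) = j + (r + 1) by ring,
        Function.iterate_add_apply, hr, iterate_map_zero]
    simpa only [sup_eq_left.2 hR] using
      E.mem_span_ker_sup_span_mul_iterate hp hy hE hf (hR.trans (Ideal.span_le.2 fun x hx => hx.1))

theorem exists_eq_smul_span_range_eq_top [IsDomain B] (D : Derivation R B B) (hD : D ≠ 0)
    (h : (Ideal.span (Set.range D)).IsPrincipal) :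
    ∃ (m : B) (E : Derivation R B B), m ≠ 0 ∧ D = m • E ∧ Ideal.span (Set.range E) = ⊤ := by
  obtain ⟨m, hm⟩ := h.principal
  have hdvd (f : B) : ∃ e, D f = m * e :=
    Ideal.mem_span_singleton.1 (show D f ∈ B ∙ m from hm ▸ Ideal.subset_span ⟨f, rfl⟩)
  choose e he using hdvd
  have hm0 : m ≠ 0 := by
    rintro rfl
    exact hD (ext fun f => by simpa using he f)
  let E : Derivation R B B := Derivation.mk'
    { toFun := e
      map_add' := fun f g => mul_left_cancel₀ hm0 <| by rw [mul_add, ← he, ← he, ← he, map_add]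
      map_smul' := fun r f => mul_left_cancel₀ hm0 <| by
        rw [← he, map_smul, he, RingHom.id_apply, mul_smul_comm] }
    fun a b => mul_left_cancel₀ hm0 <| by
      change m * e (a * b) = m * (a * e b + b * e a)
      rw [← he, leibniz, he, he, smul_eq_mul, smul_eq_mul]
      ring
  have hDE : D = m • E := ext fun f => he f
  refine ⟨m, E, hm0, hDE, ?_⟩
  have hrange : Set.range D = LinearMap.mulLeft B m '' Set.range E := by
    rw [← Set.range_comp]
    exact congrArg Set.range (funext he)
  have hmD : m ∈ Ideal.span (Set.range D) := hm ▸ Ideal.mem_span_singleton_self m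
  rw [Ideal.span, hrange, Submodule.span_image, Submodule.mem_map] at hmD
  obtain ⟨x, hx, hmx⟩ := hmD
  rw [LinearMap.mulLeft_apply] at hmx
  rw [Ideal.eq_top_iff_one, ← mul_left_cancel₀ hm0 (hmx.trans (mul_one m).symm)]
  exact hx

theorem exists_smul_eq_apply_eq_one {y : B} (hy : IsUnit (E y)) :
    ∃ (u : Bˣ) (E' : Derivation R B B), E = (u : B) • E' ∧ E' y = 1 := by
  refine ⟨hy.unit, (↑hy.unit⁻¹ : B) • E, ?_, ?_⟩
  · rw [smul_smul, Units.mul_inv, one_smul]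
  · rw [smul_apply, smul_eq_mul, hy.val_inv_mul]

open IsLocalRing in
theorem exists_span_insert_ker_eq_maximalIdeal [IsDomain B] [IsLocalRing B] {p : ℕ} [CharP B p]
    (hp : p.Prime) (D : Derivation R B B) (hD : D ≠ 0) (hcl : D.IsPClosed p)
    (hprin : (Ideal.span (Set.range D)).IsPrincipal) :
    ∃ y, Ideal.span (insert y {x | x ∈ maximalIdeal B ∧ D x = 0}) = maximalIdeal B := by
  obtain ⟨m, E, hm, rfl, hE⟩ := D.exists_eq_smul_span_range_eq_top hD hprin
  have normalize (y : B) (hy : IsUnit (E y)) : ∃ (u : Bˣ) (E' : Derivation R B B),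
      E = (u : B) • E' ∧ E' y = 1 ∧ ∀ f, E'^[p] f = 0 := by
    obtain ⟨u, E', rfl, hy1⟩ := E.exists_smul_eq_apply_eq_one hy
    rw [smul_smul] at hcl
    exact ⟨u, E', rfl, hy1, E'.iterate_eq_zero_of_isPClosed hp hy1 (mul_ne_zero hm u.ne_zero) hcl⟩
  by_cases h : ∃ y ∈ maximalIdeal B, IsUnit (E y)
  · obtain ⟨y, hy𝔪, hyu⟩ := h
    obtain ⟨u, E', rfl, hy1, hnil⟩ := normalize y hyu
    exact ⟨y, by simpa [hm] using E'.span_insert_ker_eq hp hy1 hnil hy𝔪⟩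
  · push Not at h
    obtain ⟨_, ⟨z, rfl⟩, hz⟩ := exists_isUnit_of_span_eq_top hE
    obtain ⟨u, E', rfl, hz1, hnil⟩ := normalize z hz
    have hmaps : Set.MapsTo E' (maximalIdeal B) (maximalIdeal B) := fun x hx =>
      (mem_maximalIdeal _).2 fun hx' => h x hx (by simpa [Units.isUnit_units_mul] using hx')
    refine ⟨0, ?_⟩
    rw [Ideal.span_insert_zero]
    simpa [hm] using E'.span_ker_eq hp hz1 hnil hmaps

end Derivation

/-- Let `B` be a local domain containing a field of characteristic `p > 0`, with maximal
ideal `𝔪`, and let `D : B → B` be a nonzero `p`-closed derivation (its unique extension to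
the fraction field satisfies `D^p = h·D` for some `h` in the fraction field; equivalently,
since `D^p` is again a derivation in characteristic `p`, there are `h₁, h₂ ∈ B` with
`h₂ ≠ 0` and `h₂·D^p(f) = h₁·D(f)` for all `f`).  Assume the ideal generated by the image
of `D` is principal.  Then `𝔪` is generated by a set `s` of elements killed by `D`
together with one further element `y`; moreover if `𝔪` is generated by `n` elements then
one can take `s` of cardinality `n - 1`. -/
theorem good_coordinates_of_pClosed {B F : Type*} [CommRing B] [IsDomain B] [IsLocalRing B]
    [Field F] [Algebra F B] (p : ℕ) (hp : p.Prime) [CharP F p]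
    (D : B → B) (hadd : ∀ x y : B, D (x + y) = D x + D y)
    (hleib : ∀ x y : B, D (x * y) = x * D y + D x * y)
    (hD : D ≠ 0)
    (hclosed : ∃ h₁ h₂ : B, h₂ ≠ 0 ∧ ∀ f : B, h₂ * D^[p] f = h₁ * D f)
    (hprin : (Ideal.span (Set.range D)).IsPrincipal) :
    (∃ (s : Set B) (y : B), (∀ x ∈ s, D x = 0) ∧
        Ideal.span (s ∪ {y}) = IsLocalRing.maximalIdeal B) ∧
    (∀ (n : ℕ) (t : Finset B), t.card = n →
        Ideal.span (t : Set B) = IsLocalRing.maximalIdeal B →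
        ∃ (x : Fin (n - 1) → B) (y : B), (∀ j, D (x j) = 0) ∧
          Ideal.span (Set.range x ∪ {y}) = IsLocalRing.maximalIdeal B) := by
  have : CharP B p := charP_of_injective_algebraMap (algebraMap F B).injective p
  let D' : Derivation ℤ B B := .mk' (AddMonoidHom.mk' D hadd).toIntLinearMap fun a b => by
    simp [hleib, mul_comm]
  have hD' : D' ≠ 0 := fun h => hD (congrArg DFunLike.coe h)
  obtain ⟨y, hy⟩ := D'.exists_span_insert_ker_eq_maximalIdeal hp hD' hclosed hprin
  refine ⟨⟨{x | x ∈ IsLocalRing.maximalIdeal B ∧ D x = 0}, y, fun x hx => hx.2,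
    by rwa [Set.union_singleton]⟩, fun n t ht htspan => ?_⟩
  obtain ⟨v, y', hvS, hv, hspan⟩ := IsLocalRing.exists_finset_subset_card_le_pred hy t htspan
  obtain ⟨x, hx, hxspan⟩ := Submodule.exists_fin_span_range_eq (R := B) v (ht ▸ hv)
  refine ⟨x, y', fun j => (hx j).elim (fun h => h ▸ D'.map_zero) fun h => (hvS h).2, ?_⟩
  rw [Set.union_singleton, ← hspan, Ideal.span, Submodule.span_insert, Submodule.span_insert,
    hxspan]
end

section
/- Let B be a local domain containing a field of characteristic p > 0, and let D : B → B be a nonzero derivation of additive type, i.e., D^p = 0. Assume D is fixed-point-free, i.e., the ideal of B generated by the image of D is the unit ideal. Then there exists x ∈ B with D(x) = 1. -/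
/-!
Since `B` is local, some `D a` is a unit; put `u = (D a)⁻¹` and `E = u • D`, so that `E a = 1`,
and we look for `x` with `E x = u`. A slice `a` of `E` makes `v` a value of `E` as soon as
`E^(p-1) v = 0`, by an explicit telescoping sum with factorial coefficients, which are units
below `p`. To get `E^(p-1) u = 0`, extend `D` to `B[X]` by `X ↦ 1`. The extension `D̄` still
has `D̄^p = 0`; writing `D̄^p = ∑ Qᵢ Ēⁱ` with `Ē = u • D̄` and testing on the powers of `a` forces
`Ē^p = 0`, and `Ē^p X = Ē^(p-1) u`.
-/

open Polynomial Finset Nat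

theorem IsLocalRing.exists_isUnit_of_span_eq_top_s3 {R : Type*} [CommRing R] [IsLocalRing R]
    {s : Set R} (hs : Ideal.span s = ⊤) : ∃ x ∈ s, IsUnit x := by
  by_contra! h
  have hle : Ideal.span s ≤ maximalIdeal R := Ideal.span_le.mpr fun x hx => h x hx
  exact (maximalIdeal.isMaximal R).ne_top (top_le_iff.mp (hs ▸ hle))

theorem Polynomial.iterate_derivative_eq_zero_of_charP {R : Type*} [CommRing R] (p : ℕ)
    (hp : 0 < p) [CharP R p] (f : R[X]) : derivative^[p] f = 0 := by
  ext m
  have hdvd : p ∣ (m + p).descFactorial p :=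
    (Nat.dvd_factorial hp le_rfl).trans (Nat.factorial_dvd_descFactorial _ _)
  rw [coeff_iterate_derivative, coeff_zero, nsmul_eq_mul,
    (CharP.cast_eq_zero_iff R p _).mpr hdvd, zero_mul]

namespace Derivation

variable {A R : Type*} [CommRing A] [CommRing R] [Algebra A R]

theorem iterate_apply_pow_of_apply_eq_one (E : Derivation A R R) {a : R} (ha : E a = 1)
    (i j : ℕ) : E^[j] (a ^ i) = i.descFactorial j • a ^ (i - j) := by
  induction j with
  | zero => simp
  | succ j ih =>
    rw [Function.iterate_succ_apply', ih, map_nsmul, leibniz_pow, ha, smul_eq_mul, mul_one,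
      smul_smul, Nat.descFactorial_succ, Nat.sub_sub, mul_comm]

/-- With `N k = n! / k!`, the values `d ((-1)^k N (k+1) a^(k+1) d^k v)` telescope, and their sum
over `k < n` is `n! v`. -/
theorem exists_apply_eq_of_iterate_eq_zero (d : Derivation A R R) {a : R} (ha : d a = 1) {n : ℕ}
    (hn : IsUnit (n ! : R)) {v : R} (hv : d^[n] v = 0) : ∃ x, d x = v := by
  set N : ℕ → R := fun k => ((n ! / k ! : ℕ) : R)
  have hN : ∀ k < n, N (k + 1) * (k + 1) = N k := by
    intro k hk
    have h1 := Nat.div_mul_cancel (Nat.factorial_dvd_factorial (show k + 1 ≤ n by omega))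
    have h2 := Nat.div_mul_cancel (Nat.factorial_dvd_factorial hk.le)
    rw [Nat.factorial_succ, ← mul_assoc] at h1
    have : n ! / (k + 1)! * (k + 1) = n ! / k ! :=
      Nat.eq_of_mul_eq_mul_right (Nat.factorial_pos k) (h1.trans h2.symm)
    simp only [N, ← this]
    push_cast
    ring
  set g : ℕ → R := fun k => (-1) ^ k * N k * (a ^ k * d^[k] v)
  have hterm : ∀ k ∈ range n,
      d ((-1) ^ k * N (k + 1) * (a ^ (k + 1) * d^[k] v)) = g k - g (k + 1) := by
    intro k hk
    have hconst : d ((-1) ^ k * N (k + 1)) = 0 := by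
      simp [N, leibniz, leibniz_pow]
    rw [leibniz, hconst, leibniz, leibniz_pow, ha, ← Function.iterate_succ_apply' d,
      Nat.add_sub_cancel]
    simp only [g, smul_eq_mul, nsmul_eq_mul]
    push_cast
    linear_combination (-1) ^ k * a ^ k * d^[k] v * hN k (mem_range.mp hk)
  have hsum : d (∑ k ∈ range n, (-1) ^ k * N (k + 1) * (a ^ (k + 1) * d^[k] v)) = n ! * v := by
    rw [map_sum, sum_congr rfl hterm, sum_range_sub']
    simp [g, N, hv]
  obtain ⟨μ, hμ⟩ := hn.exists_left_inv
  have hμ' : d μ = 0 := by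
    rw [d.leibniz_of_mul_eq_one hμ, map_natCast, smul_zero]
  refine ⟨μ * ∑ k ∈ range n, (-1) ^ k * N (k + 1) * (a ^ (k + 1) * d^[k] v), ?_⟩
  rw [leibniz, hμ', hsum, smul_zero, add_zero, smul_eq_mul, ← mul_assoc, hμ, one_mul]

/-- The coefficients expressing `D^n` through the powers of `E` when `D = c • E`. -/
def iterateSMulCoeff (D : R → R) (c : R) : ℕ → ℕ → R
  | 0, i => if i = 0 then 1 else 0
  | n + 1, 0 => D (iterateSMulCoeff D c n 0)
  | n + 1, i + 1 => D (iterateSMulCoeff D c n (i + 1)) + c * iterateSMulCoeff D c n i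

section IterateSMul

variable (D E : Derivation A R R) (c : R)

theorem iterateSMulCoeff_of_lt {n i : ℕ} (h : n < i) : iterateSMulCoeff D c n i = 0 := by
  induction n generalizing i with
  | zero => simp [iterateSMulCoeff, h.ne']
  | succ n ih =>
    obtain ⟨i, rfl⟩ := Nat.exists_eq_add_one_of_ne_zero (by omega : i ≠ 0)
    simp [iterateSMulCoeff, ih (by omega : n < i + 1), ih (by omega : n < i)]

theorem iterateSMulCoeff_self (n : ℕ) : iterateSMulCoeff D c n n = c ^ n := by
  induction n with
  | zero => simp [iterateSMulCoeff]
  | succ n ih =>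
    simp [iterateSMulCoeff, ih, iterateSMulCoeff_of_lt D c (Nat.lt_succ_self n), pow_succ,
      mul_comm]

theorem iterate_eq_sum_of_eq_smul (hDE : D = c • E) (n : ℕ) (f : R) :
    D^[n] f = ∑ i ∈ range (n + 1), iterateSMulCoeff D c n i * E^[i] f := by
  induction n with
  | zero => simp [iterateSMulCoeff]
  | succ n ih =>
    set Q := iterateSMulCoeff D c
    have hsplit : ∑ i ∈ range (n + 2), Q (n + 1) i * E^[i] f =
        ∑ i ∈ range (n + 2), D (Q n i) * E^[i] f +
          ∑ i ∈ range (n + 1), c * Q n i * E^[i + 1] f := by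
      rw [sum_range_succ' _ (n + 1), sum_range_succ' (fun i => D (Q n i) * E^[i] f) (n + 1)]
      simp only [Q, iterateSMulCoeff, add_mul, sum_add_distrib]
      ring
    rw [hsplit, sum_range_succ _ (n + 1), show Q n (n + 1) = 0 from iterateSMulCoeff_of_lt D c
      (Nat.lt_succ_self n), map_zero, zero_mul, add_zero, Function.iterate_succ_apply', ih,
      map_sum, ← sum_add_distrib]
    refine sum_congr rfl fun i _ => ?_
    rw [leibniz, hDE, Function.iterate_succ_apply', smul_apply, smul_eq_mul, smul_eq_mul,
      smul_eq_mul]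
    ring

/-- Evaluating `D^n = ∑ Q i • E^i` at `a^k`, where `E^i (a^k) = 0` for `i > k` and
`E^k (a^k) = k!`, kills the coefficients `Q k` for `k < n` one by one. -/
theorem iterate_eq_zero_of_eq_smul (hDE : D = c • E) (hc : IsUnit c) {a : R} (ha : E a = 1)
    {n : ℕ} (hfac : ∀ i < n, IsUnit (i ! : R)) (hD : (⇑D)^[n] = 0) : (⇑E)^[n] = 0 := by
  have hQ : ∀ k < n, iterateSMulCoeff D c n k = 0 := by
    intro k
    induction k using Nat.strong_induction_on with
    | _ k ih =>
      intro hk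
      have h := iterate_eq_sum_of_eq_smul D E c hDE n (a ^ k)
      rw [hD, Pi.zero_apply, sum_eq_single_of_mem k (mem_range.mpr (by omega))] at h
      · rw [iterate_apply_pow_of_apply_eq_one E ha, descFactorial_self, Nat.sub_self, pow_zero,
          nsmul_eq_mul, mul_one] at h
        exact (hfac k hk).mul_left_eq_zero.mp h.symm
      · intro i _ hik
        rcases lt_or_gt_of_ne hik with hlt | hgt
        · rw [ih i hlt (hlt.trans hk), zero_mul]
        · rw [iterate_apply_pow_of_apply_eq_one E ha, descFactorial_eq_zero_iff_lt.mpr hgt,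
            zero_smul, mul_zero]
  funext f
  have h := iterate_eq_sum_of_eq_smul D E c hDE n f
  rw [hD, Pi.zero_apply, sum_range_succ, sum_eq_zero fun i hi => by rw [hQ i (mem_range.mp hi),
    zero_mul], zero_add, iterateSMulCoeff_self] at h
  exact (hc.pow n).mul_right_eq_zero.mp h.symm

end IterateSMul

noncomputable def extendX (d : Derivation A R R) : Derivation A R[X] R[X] :=
  PolynomialModule.equivPolynomialSelf.compDer d.mapCoeffs +
    (derivative' : Derivation R R[X] R[X]).restrictScalars A

theorem coeff_extendX (d : Derivation A R R) (f : R[X]) (n : ℕ) :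
    (d.extendX f).coeff n = d (f.coeff n) + (derivative f).coeff n := by
  rw [extendX, add_apply, coeff_add]
  rfl

theorem extendX_C (d : Derivation A R R) (b : R) : d.extendX (C b) = C (d b) := by
  ext n
  simp only [coeff_extendX, coeff_C, derivative_C, coeff_zero, add_zero]
  split_ifs <;> simp

theorem extendX_X (d : Derivation A R R) : d.extendX X = 1 := by
  ext n
  simp only [coeff_extendX, coeff_X, derivative_X, coeff_one]
  split_ifs <;> simp

/-- `d.extendX` is the sum of the commuting operators "`d` on coefficients" and `derivative`,
whose `p`-th powers vanish, so its `p`-th power vanishes in characteristic `p`. -/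
theorem iterate_extendX_eq_zero (p : ℕ) (hp : p.Prime) [CharP R p] (d : Derivation A R R)
    (hd : (⇑d)^[p] = 0) : (⇑d.extendX)^[p] = 0 := by
  set M : Module.End A R[X] :=
    (PolynomialModule.equivPolynomialSelf.compDer d.mapCoeffs).toLinearMap
  set δ : Module.End A R[X] := (derivative (R := R)).restrictScalars A
  have coeff_M_pow : ∀ k f n, ((M ^ k) f).coeff n = d^[k] (f.coeff n) := by
    intro k
    induction k with
    | zero => simp
    | succ k ih =>
      intro f n
      rw [pow_succ, Module.End.mul_apply, ih, Function.iterate_succ_apply]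
      rfl
  have hM : M ^ p = 0 := by
    ext f n
    simp [coeff_M_pow, hd]
  have hδ : δ ^ p = 0 := by
    ext f : 1
    rw [Module.End.pow_apply]
    exact iterate_derivative_eq_zero_of_charP p hp.pos f
  have hcomm : Commute M δ := by
    ext f n
    have coeff_M : ∀ f n, (M f).coeff n = d (f.coeff n) := coeff_M_pow 1
    change (M (derivative f)).coeff n = (derivative (M f)).coeff n
    rw [coeff_M, coeff_derivative, coeff_derivative, coeff_M]
    simp [mul_comm]
  have hpzero : (p : Module.End A R[X]) = 0 := by
    ext f : 1
    simp [Module.End.natCast_apply]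
  obtain ⟨r, hr⟩ := hcomm.exists_add_pow_prime_eq hp
  have hpow : d.extendX.toLinearMap ^ p = 0 := by
    change (M + δ) ^ p = 0
    rw [hr, hM, hδ, hpzero]
    simp
  funext f
  simpa [Module.End.pow_apply] using congrArg (· f) hpow

end Derivation

open Derivation

theorem exists_preimage_one_of_additive_fixedPointFree_general {B F : Type*} [CommRing B]
    [IsLocalRing B] [Field F] [Algebra F B] (p : ℕ) (hp : p.Prime) [CharP F p]
    (D : B → B) (hadd : ∀ x y : B, D (x + y) = D x + D y)
    (hleib : ∀ x y : B, D (x * y) = x * D y + D x * y)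
    (hadditive : D^[p] = 0)
    (hfree : Ideal.span (Set.range D) = ⊤) :
    ∃ x : B, D x = 1 := by
  have : Fact p.Prime := ⟨hp⟩
  have : CharP B p := charP_of_injective_algebraMap (algebraMap F B).injective p
  let d : Derivation ℤ B B := Derivation.mk' (AddMonoidHom.mk' D hadd).toIntLinearMap
    fun x y => by simp [hleib, mul_comm]
  obtain ⟨_, ⟨a, rfl⟩, ha⟩ := IsLocalRing.exists_isUnit_of_span_eq_top_s3 hfree
  obtain ⟨u, hu⟩ := ha.exists_left_inv
  set E := u • d
  set Ebar := C u • d.extendX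
  have hDE : d.extendX = C (D a) • Ebar := by
    rw [smul_smul, ← C_mul, mul_comm, hu, C_1, one_smul]
  have hEbar_Ca : Ebar (C a) = 1 := by
    rw [Derivation.smul_apply, extendX_C, smul_eq_mul, ← C_mul, ← C_1]
    exact congrArg C hu
  have hEbar : Ebar^[p] = 0 :=
    iterate_eq_zero_of_eq_smul _ _ _ hDE (ha.map C) hEbar_Ca
      (fun i hi => (IsUnit.natCast_factorial_iff_of_charP p).mpr hi)
      (iterate_extendX_eq_zero p hp d hadditive)
  have hsemi : Function.Semiconj C E Ebar := fun b => by
    simp [E, Ebar, extendX_C]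
  have hEu : E^[p - 1] u = 0 := by
    have h := congrFun hEbar X
    have hEbarX : Ebar X = C u := by simp [Ebar, extendX_X]
    rwa [Pi.zero_apply, ← Nat.sub_add_cancel hp.one_le, Function.iterate_succ_apply, hEbarX,
      ← (hsemi.iterate_right _) u, C_eq_zero] at h
  obtain ⟨x, hx⟩ := exists_apply_eq_of_iterate_eq_zero E hu
    ((IsUnit.natCast_factorial_iff_of_charP p).mpr (Nat.sub_lt hp.pos one_pos)) hEu
  exact ⟨x, (IsUnit.of_mul_eq_one _ hu).mul_right_injective (hx.trans (mul_one u).symm)⟩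

/-- Let `B` be a local domain containing a field of characteristic `p > 0`, and let
`D : B → B` be a nonzero derivation of additive type (`D^p = 0`) that is fixed-point-free
(the ideal generated by the image of `D` is the unit ideal).  Then there exists `x ∈ B`
with `D x = 1`. -/
theorem exists_preimage_one_of_additive_fixedPointFree {B F : Type*} [CommRing B]
    [IsDomain B] [IsLocalRing B] [Field F] [Algebra F B] (p : ℕ) (hp : p.Prime) [CharP F p]
    (D : B → B) (hadd : ∀ x y : B, D (x + y) = D x + D y)
    (hleib : ∀ x y : B, D (x * y) = x * D y + D x * y)
    (hD : D ≠ 0) (hadditive : D^[p] = 0)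
    (hfree : Ideal.span (Set.range D) = ⊤) :
    ∃ x : B, D x = 1 :=
  exists_preimage_one_of_additive_fixedPointFree_general (F := F) p hp D hadd hleib hadditive hfree
end

section
/- Let k be an algebraically closed field of characteristic p > 0 and B = k[[x,y]]. Let D be a nonzero k-linear derivation of B of additive type, i.e., D^p = 0, and assume the ideal (D(x), D(y)) is a proper ideal of finite colength (equivalently, the fixed locus of D is supported exactly at the closed point). Then dim_k B/(D(x), D(y)) ≥ 2. -/
/-!
Suppose `dim_k B/(D x, D y) ≤ 1`. Being proper, the ideal `(D x, D y)` is then the maximal ideal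
`m = (x, y)`, so `D` preserves `m` and `m²` and induces a `k`-linear endomorphism of `m/m²`.
Since `D(m)` generates `m` and `B/m = k`, this endomorphism is surjective; since `D^p = 0` it is
nilpotent. Hence `m/m² = 0`, and Nakayama's lemma in the Noetherian local ring `B` gives `m = 0`,
which is absurd as `x ≠ 0`.
-/

open IsLocalRing MvPowerSeries

theorem Submodule.le_map_pow_sup_of_le_map_sup {K V : Type*} [Semiring K] [AddCommMonoid V]
    [Module K V] {f : Module.End K V} {M Q : Submodule K V} (hQ : Q.map f ≤ Q)
    (hM : M ≤ M.map f ⊔ Q) (n : ℕ) : M ≤ M.map (f ^ n) ⊔ Q := by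
  induction n with
  | zero => simp [Module.End.one_eq_id]
  | succ n ih =>
    calc M ≤ M.map f ⊔ Q := hM
      _ ≤ (M.map (f ^ n) ⊔ Q).map f ⊔ Q := sup_le_sup_right (Submodule.map_mono ih) Q
      _ = M.map (f ^ (n + 1)) ⊔ Q.map f ⊔ Q := by
        rw [Submodule.map_sup, pow_succ', Module.End.mul_eq_comp, Submodule.map_comp]
      _ ≤ M.map (f ^ (n + 1)) ⊔ Q := by rw [sup_assoc, sup_eq_right.2 hQ]

namespace Derivation

variable {k R : Type*} [CommRing k] [CommRing R] [Algebra k R] (D : Derivation k R R)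

theorem map_mem_span_of_map_mem_span {s : Set R} (hs : ∀ a ∈ s, D a ∈ Ideal.span s) :
    ∀ a ∈ Ideal.span s, D a ∈ Ideal.span s := by
  intro a ha
  induction ha using Submodule.span_induction with
  | mem a ha => exact hs a ha
  | zero => simp
  | add a b _ _ ha hb => simpa using add_mem ha hb
  | smul r a ha hDa =>
    rw [smul_eq_mul, leibniz]
    exact add_mem (Ideal.mul_mem_left _ r hDa) (Ideal.mul_mem_right (D r) _ ha)

theorem map_mem_mul {I J : Ideal R} (hI : ∀ a ∈ I, D a ∈ I) (hJ : ∀ a ∈ J, D a ∈ J) :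
    ∀ a ∈ I * J, D a ∈ I * J := by
  intro a ha
  refine Submodule.mul_induction_on ha (fun a ha b hb => ?_) (fun a b ha hb => ?_)
  · rw [leibniz, smul_eq_mul, smul_eq_mul, mul_comm b]
    exact add_mem (Ideal.mul_mem_mul ha (hJ b hb)) (Ideal.mul_mem_mul (hI a ha) hb)
  · simpa using add_mem ha hb

/-- A coefficient `r` in `r * D a` may be replaced by a scalar `c` at the cost of an element
of `m ^ 2`, so `D` induces a surjection of `m / m ^ 2` onto itself. -/
theorem le_map_sup_sq {m : Ideal R} (hres : ∀ r : R, ∃ c : k, r - algebraMap k R c ∈ m)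
    (hDm : ∀ a ∈ m, D a ∈ m) (hspan : m ≤ Ideal.span (D '' m)) :
    m.restrictScalars k ≤
      (m.restrictScalars k).map (D : Module.End k R) ⊔ (m ^ 2).restrictScalars k := by
  have hspan_le : Ideal.span (D '' m) ≤ m := Ideal.span_le.2 (Set.image_subset_iff.2 hDm)
  intro a ha
  replace ha := hspan ha
  induction ha using Submodule.span_induction with
  | mem _ h =>
    obtain ⟨b, hb, rfl⟩ := h
    exact Submodule.mem_sup_left ⟨b, hb, rfl⟩
  | zero => exact zero_mem _
  | add a b _ _ ha hb => exact add_mem ha hb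
  | smul r a ha ih =>
    obtain ⟨c, hc⟩ := hres r
    have hsplit : r • a = c • a + (r - algebraMap k R c) * a := by
      rw [smul_eq_mul, sub_mul, Algebra.smul_def]; ring
    rw [hsplit]
    exact add_mem (Submodule.smul_mem _ c ih)
      (Submodule.mem_sup_right (by rw [pow_two]; exact Ideal.mul_mem_mul hc (hspan_le ha)))

theorem le_sq_of_isNilpotent {m : Ideal R} (hres : ∀ r : R, ∃ c : k, r - algebraMap k R c ∈ m)
    (hDm : ∀ a ∈ m, D a ∈ m) (hspan : m ≤ Ideal.span (D '' m))
    (hnil : IsNilpotent (D : Module.End k R)) : m ≤ m ^ 2 := by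
  obtain ⟨n, hn⟩ := hnil
  have hDsq : ∀ a ∈ m ^ 2, D a ∈ m ^ 2 := by
    rw [pow_two]; exact D.map_mem_mul hDm hDm
  have := Submodule.le_map_pow_sup_of_le_map_sup (fun _ ⟨a, ha, h⟩ => h ▸ hDsq a ha)
    (D.le_map_sup_sq hres hDm hspan) n
  rwa [hn, Submodule.map_zero, bot_sup_eq] at this

theorem maximalIdeal_eq_bot_of_isNilpotent [IsNoetherianRing R] [IsLocalRing R]
    (hres : ∀ r : R, ∃ c : k, r - algebraMap k R c ∈ maximalIdeal R)
    (hDm : ∀ a ∈ maximalIdeal R, D a ∈ maximalIdeal R)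
    (hspan : maximalIdeal R ≤ Ideal.span (D '' maximalIdeal R))
    (hnil : IsNilpotent (D : Module.End k R)) : maximalIdeal R = ⊥ := by
  have hidem : IsIdempotentElem (maximalIdeal R) := le_antisymm Ideal.mul_le_right
    (pow_two (maximalIdeal R) ▸ D.le_sq_of_isNilpotent hres hDm hspan hnil)
  exact ((Ideal.isIdempotentElem_iff_eq_bot_or_top_of_isLocalRing _).1 hidem).resolve_right
    (maximalIdeal.isMaximal R).ne_top

end Derivation

theorem Ideal.isMaximal_of_finrank_quotient_eq_one {K A : Type*} [Field K] [CommRing A]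
    [Algebra K A] {I : Ideal A} (h : Module.finrank K (A ⧸ I) = 1) : I.IsMaximal :=
  Ideal.Quotient.maximal_of_isField I <| MulEquiv.isField (Field.toIsField K)
    (RingEquiv.ofBijective _ (Algebra.finrank_eq_one_iff_bijective_algebraMap.1 h)).symm.toMulEquiv

namespace MvPowerSeries

theorem mem_maximalIdeal_iff {σ k : Type*} [Field k] {f : MvPowerSeries σ k} :
    f ∈ maximalIdeal (MvPowerSeries σ k) ↔ constantCoeff f = 0 := by
  rw [mem_maximalIdeal, mem_nonunits_iff, isUnit_iff_constantCoeff, isUnit_iff_ne_zero, not_not]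

theorem mem_span_X_zero_X_one_of_constantCoeff_eq_zero {R : Type*} [CommRing R]
    {f : MvPowerSeries (Fin 2) R} (hf : constantCoeff f = 0) :
    f ∈ Ideal.span {X 0, X 1} := by
  let g : MvPowerSeries (Fin 2) R := fun d => if d 0 = 0 then coeff d f else 0
  have hg_coeff : ∀ d, coeff d g = if d 0 = 0 then coeff d f else 0 := fun _ => rfl
  have hfg : X 0 ∣ f - g := X_dvd_iff.2 fun d hd => by simp [hg_coeff, hd]
  have hg : X 1 ∣ g := X_dvd_iff.2 fun d hd => by
    by_cases hd0 : d 0 = 0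
    · obtain rfl : d = 0 := by ext i; fin_cases i <;> simp [hd0, hd]
      simpa [hg_coeff] using hf
    · simp [hg_coeff, hd0]
  obtain ⟨u, hu⟩ := hfg
  obtain ⟨v, hv⟩ := hg
  exact Ideal.mem_span_pair.2 ⟨u, v, by rw [mul_comm u, mul_comm v, ← hu, ← hv, sub_add_cancel]⟩

theorem maximalIdeal_eq_span_X_zero_X_one {k : Type*} [Field k] :
    maximalIdeal (MvPowerSeries (Fin 2) k) = Ideal.span {X 0, X 1} := by
  refine le_antisymm (fun f hf => mem_span_X_zero_X_one_of_constantCoeff_eq_zero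
    (mem_maximalIdeal_iff.1 hf)) (Ideal.span_le.2 ?_)
  rintro _ (rfl | rfl) <;> exact mem_maximalIdeal_iff.2 (constantCoeff_X _)

end MvPowerSeries

theorem additive_type_colength_ge_two_general {k : Type*} [Field k]
    (p : ℕ)
    (D : Derivation k (MvPowerSeries (Fin 2) k) (MvPowerSeries (Fin 2) k))
    (hadditive : ∀ f, (⇑D)^[p] f = 0)
    (hproper : Ideal.span {D (MvPowerSeries.X 0), D (MvPowerSeries.X 1)} ≠ ⊤)
    (hfin : FiniteDimensional k
      (MvPowerSeries (Fin 2) k ⧸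
        Ideal.span {D (MvPowerSeries.X 0), D (MvPowerSeries.X 1)})) :
    2 ≤ Module.finrank k
      (MvPowerSeries (Fin 2) k ⧸
        Ideal.span {D (MvPowerSeries.X 0), D (MvPowerSeries.X 1)}) := by
  set B := MvPowerSeries (Fin 2) k
  set I : Ideal B := Ideal.span {D (X 0), D (X 1)}
  by_contra! hlt
  have : Nontrivial (B ⧸ I) := Ideal.Quotient.nontrivial_iff.2 hproper
  have hI : I = maximalIdeal B := eq_maximalIdeal <| Ideal.isMaximal_of_finrank_quotient_eq_one
    (le_antisymm (Nat.le_of_lt_succ hlt) (Module.finrank_pos (R := k)))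
  have hm : maximalIdeal B = Ideal.span {X 0, X 1} := maximalIdeal_eq_span_X_zero_X_one
  have hX : ∀ i, X i ∈ maximalIdeal B := fun i => mem_maximalIdeal_iff.2 (constantCoeff_X i)
  have hDm : ∀ a ∈ maximalIdeal B, D a ∈ maximalIdeal B := by
    rw [hm]
    refine D.map_mem_span_of_map_mem_span ?_
    rintro _ (rfl | rfl) <;> rw [← hm, ← hI] <;> exact Ideal.subset_span (by simp)
  have hspan : maximalIdeal B ≤ Ideal.span (D '' maximalIdeal B) :=
    calc maximalIdeal B = I := hI.symm
      _ ≤ _ := Ideal.span_mono (by rintro _ (rfl | rfl) <;> exact ⟨_, hX _, rfl⟩)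
  have hbot : maximalIdeal B = ⊥ := D.maximalIdeal_eq_bot_of_isNilpotent
    (fun r => ⟨constantCoeff r, mem_maximalIdeal_iff.2 (by simp [MvPowerSeries.algebraMap_apply])⟩)
    hDm hspan ⟨p, LinearMap.ext fun f => by simp [Module.End.pow_apply, hadditive]⟩
  have hX0 : (X 0 : B) = 0 := by simpa [hbot] using hX 0
  simpa using congrArg (coeff (Finsupp.single 0 1)) hX0

/-- Let `k` be an algebraically closed field of characteristic `p > 0` and `B = k[[x,y]]`.
If `D` is a nonzero `k`-derivation of `B` of additive type (`D^p = 0`) whose fixed ideal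
`(D x, D y)` is a proper ideal of finite colength, then `dim_k B/(D x, D y) ≥ 2`. -/
theorem additive_type_colength_ge_two {k : Type*} [Field k] [IsAlgClosed k]
    (p : ℕ) (hp : p.Prime) [CharP k p]
    (D : Derivation k (MvPowerSeries (Fin 2) k) (MvPowerSeries (Fin 2) k))
    (hD : D ≠ 0) (hadditive : ∀ f, (⇑D)^[p] f = 0)
    (hproper : Ideal.span {D (MvPowerSeries.X 0), D (MvPowerSeries.X 1)} ≠ ⊤)
    (hfin : FiniteDimensional k
      (MvPowerSeries (Fin 2) k ⧸
        Ideal.span {D (MvPowerSeries.X 0), D (MvPowerSeries.X 1)})) :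
    2 ≤ Module.finrank k
      (MvPowerSeries (Fin 2) k ⧸
        Ideal.span {D (MvPowerSeries.X 0), D (MvPowerSeries.X 1)}) :=
  additive_type_colength_ge_two_general p D hadditive hproper hfin
end
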